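/- arXiv:2501.10946 — 4 statements merged into one kernel-verified Lean document; each statement's English description precedes it below -/
import Mathlib

section
/- For any λ > 0 and r > 0, the Yukawa kernel admits the integral representation e^{−r/λ}/r = ∫_{−∞}^{∞} (1/√π) · exp(−r² e^t − e^{−t}/(4λ²) + t/2) dt. -/
/-!
With `a = r²` and `b = 1/(4λ²)` the integrand is `exp(-a eᵗ - b e⁻ᵗ + t/2)`. Translating `t` by
`c`, where `e^{2c} = b/a`, turns it into `e^{c/2} · exp(-2k cosh t + t/2)` with `k = √(ab)`.
Averaging over `t ↦ -t` replaces `e^{t/2}` by `cosh (t/2)`, and since `cosh t = 1 + 2 sinh² (t/2)`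
the substitution `y = 2 sinh (t/2)` reduces the integral to the Gaussian
`e^{-2k} ∫ exp(-k y²) dy = e^{-2k} √(π/k)`.
-/

open Real MeasureTheory Function

section ChangeOfVariables

variable {E : Type*} [NormedAddCommGroup E] [NormedSpace ℝ E] {g g' : ℝ → ℝ}

theorem integrable_deriv_smul_comp_of_surjective (hg : ∀ t, HasDerivAt g (g' t) t)
    (hmono : Monotone g) (hsurj : Surjective g) {F : ℝ → E} (hF : Integrable F) :
    Integrable (fun t ↦ g' t • F (g t)) := by
  rw [← integrableOn_univ, ← integrableOn_image_iff_integrableOn_deriv_smul_of_monotoneOn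
    MeasurableSet.univ (fun t _ ↦ (hg t).hasDerivWithinAt) (hmono.monotoneOn _), Set.image_univ,
    hsurj.range_eq, integrableOn_univ]
  exact hF

theorem integral_deriv_smul_comp_of_surjective (hg : ∀ t, HasDerivAt g (g' t) t)
    (hmono : Monotone g) (hsurj : Surjective g) (F : ℝ → E) :
    ∫ t, g' t • F (g t) = ∫ y, F y := by
  rw [← setIntegral_univ, ← integral_image_eq_integral_deriv_smul_of_monotoneOn
    MeasurableSet.univ (fun t _ ↦ (hg t).hasDerivWithinAt) (hmono.monotoneOn _), Set.image_univ,
    hsurj.range_eq, setIntegral_univ]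

end ChangeOfVariables

theorem integral_eq_of_add_comp_neg_eq_two_mul {f h : ℝ → ℝ} (hf : AEStronglyMeasurable f)
    (hf_nonneg : ∀ t, 0 ≤ f t) (hh : Integrable h) (hfh : ∀ t, f t + f (-t) = 2 * h t) :
    ∫ t, f t = ∫ t, h t := by
  have hf_int : Integrable f :=
    (hh.const_mul 2).mono' hf <| .of_forall fun t ↦ by
      rw [norm_of_nonneg (hf_nonneg t), ← hfh]
      linarith [hf_nonneg (-t)]
  refine mul_left_cancel₀ two_ne_zero ?_
  calc 2 * ∫ t, f t = (∫ t, f t) + ∫ t, f (-t) := by rw [integral_neg_eq_self]; ring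
    _ = ∫ t, 2 * h t := by rw [← integral_add hf_int hf_int.comp_neg]; simp_rw [hfh]
    _ = 2 * ∫ t, h t := integral_const_mul 2 _

lemma hasDerivAt_two_mul_sinh_half (t : ℝ) :
    HasDerivAt (fun t ↦ 2 * sinh (t / 2)) (cosh (t / 2)) t :=
  (((hasDerivAt_id' t).div_const 2).sinh.const_mul 2).congr_deriv (by ring)

lemma surjective_two_mul_sinh_half : Surjective fun t : ℝ ↦ 2 * sinh (t / 2) :=
  fun y ↦ ⟨2 * arsinh (y / 2), by simp [sinh_arsinh]; ring⟩

lemma monotone_two_mul_sinh_half : Monotone fun t : ℝ ↦ 2 * sinh (t / 2) :=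
  fun _ _ h ↦ mul_le_mul_of_nonneg_left (sinh_le_sinh.2 (by linarith)) zero_le_two

lemma exp_neg_mul_cosh_mul_cosh_half (k t : ℝ) :
    exp (-(2 * k * cosh t)) * cosh (t / 2) =
      exp (-(2 * k)) * (cosh (t / 2) * exp (-k * (2 * sinh (t / 2)) ^ 2)) := by
  have hcosh : cosh t = 1 + 2 * sinh (t / 2) ^ 2 := by
    conv_lhs => rw [← mul_div_cancel₀ t two_ne_zero]
    rw [cosh_two_mul, cosh_sq]; ring
  rw [hcosh, mul_left_comm, ← exp_add]; ring_nf

lemma integrable_exp_neg_mul_cosh_mul_cosh_half {k : ℝ} (hk : 0 < k) :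
    Integrable fun t ↦ exp (-(2 * k * cosh t)) * cosh (t / 2) := by
  simp_rw [exp_neg_mul_cosh_mul_cosh_half]
  exact (integrable_deriv_smul_comp_of_surjective hasDerivAt_two_mul_sinh_half
    monotone_two_mul_sinh_half surjective_two_mul_sinh_half
    (integrable_exp_neg_mul_sq hk)).const_mul _

-- For `k ≤ 0` both sides are junk zeros.
lemma integral_exp_neg_mul_cosh_mul_cosh_half (k : ℝ) :
    ∫ t, exp (-(2 * k * cosh t)) * cosh (t / 2) = √(π / k) * exp (-(2 * k)) := by
  simp_rw [exp_neg_mul_cosh_mul_cosh_half]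
  have hsubst := integral_deriv_smul_comp_of_surjective hasDerivAt_two_mul_sinh_half
    monotone_two_mul_sinh_half surjective_two_mul_sinh_half fun y ↦ exp (-k * y ^ 2)
  simp only [smul_eq_mul] at hsubst
  rw [integral_const_mul, hsubst, integral_gaussian, mul_comm]

lemma integral_exp_neg_mul_cosh_add_half {k : ℝ} (hk : 0 < k) :
    ∫ t, exp (-(2 * k * cosh t) + t / 2) = √(π / k) * exp (-(2 * k)) := by
  rw [← integral_exp_neg_mul_cosh_mul_cosh_half]
  refine integral_eq_of_add_comp_neg_eq_two_mul (by fun_prop) (fun t ↦ (exp_pos _).le)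
    (integrable_exp_neg_mul_cosh_mul_cosh_half hk) fun t ↦ ?_
  rw [cosh_neg, exp_add, exp_add, cosh_eq (t / 2), neg_div]
  ring

theorem integral_exp_neg_mul_exp_sub_mul_exp_neg_add_half {a b : ℝ} (ha : 0 < a) (hb : 0 < b) :
    ∫ t, exp (-(a * exp t) - b * exp (-t) + t / 2) = √(π / a) * exp (-(2 * √(a * b))) := by
  set c := log (b / a) / 2
  have hc : a * (exp c * exp c) = b := by
    rw [← exp_add, add_halves, exp_log (by positivity)]; field_simp
  obtain ⟨k, hak⟩ : ∃ k, a * exp c = k := ⟨_, rfl⟩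
  have hk : 0 < k := hak ▸ by positivity
  have hbk : b * exp (-c) = k := by
    rw [exp_neg]; field_simp; linear_combination exp c * hak - hc
  have hk_sqrt : √(a * b) = k := by
    rw [sqrt_eq_iff_mul_self_eq (by positivity) hk.le]
    linear_combination (a * exp c + k) * hak - a * hc
  have hshift : ∀ t, exp (-(a * exp (t + c)) - b * exp (-(t + c)) + (t + c) / 2) =
      exp (c / 2) * exp (-(2 * k * cosh t) + t / 2) := fun t ↦ by
    rw [← exp_add]
    congr 1
    rw [cosh_eq, neg_add, exp_add, exp_add]
    linear_combination (-exp t) * hak - exp (-t) * hbk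
  rw [← integral_add_right_eq_self _ c]
  simp_rw [hshift]
  rw [integral_const_mul, integral_exp_neg_mul_cosh_add_half hk, hk_sqrt, ← mul_assoc, exp_half,
    ← sqrt_mul (exp_pos c).le]
  congr 2
  rw [← hak]
  field_simp

/-- Integral representation of the Yukawa kernel:
`e^{−r/λ}/r = ∫_{−∞}^∞ (1/√π)·exp(−r² e^t − e^{−t}/(4λ²) + t/2) dt`. -/
theorem yukawa_integral_repr (lam r : ℝ) (hlam : 0 < lam) (hr : 0 < r) :
    Real.exp (-r / lam) / r =
      ∫ t : ℝ, (1 / Real.sqrt π) *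
        Real.exp (-(r ^ 2 * Real.exp t) - Real.exp (-t) / (4 * lam ^ 2) + t / 2) := by
  have hscreen : √(r ^ 2 * (4 * lam ^ 2)⁻¹) = r / (2 * lam) := by
    rw [sqrt_eq_iff_mul_self_eq (by positivity) (by positivity)]; field_simp; ring
  have hintegral := integral_exp_neg_mul_exp_sub_mul_exp_neg_add_half (pow_pos hr 2)
    (by positivity : 0 < (4 * lam ^ 2)⁻¹)
  simp_rw [← div_eq_inv_mul] at hintegral
  rw [integral_const_mul, hintegral, hscreen, sqrt_div' _ (sq_nonneg r), sqrt_sq hr.le]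
  field_simp
end

section
/- Fix λ > 0 and r > 0, and let f(t) = (1/√π)·exp(−r² e^t − e^{−t}/(4λ²) + t/2). Then the Fourier transform of f with respect to t, defined as f̂(k) = ∫_{−∞}^∞ f(t) e^{−2πikt} dt, equals (2/√π)·(2λr)^{−1/2 + 2πik}·K_{1/2 − 2πik}(r/λ), where K_ν(x) = (x^ν/2^{ν+1}) ∫_0^∞ e^{−s − x²/(4s)} s^{−(ν+1)} ds is the modified Bessel function of the second kind extended to complex order ν. -/
open Real MeasureTheory Complex

/-- The modified Bessel function of the second kind with (complex) order `ν`,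
`K_ν(x) = (x^ν/2^{ν+1}) ∫_0^∞ e^{−s − x²/(4s)} s^{−(ν+1)} ds`. -/
noncomputable def Kbessel (ν : ℂ) (x : ℝ) : ℂ :=
  (x : ℂ) ^ ν / 2 ^ (ν + 1) *
    ∫ s in Set.Ioi (0 : ℝ), Complex.exp (-(s : ℂ) - (x : ℂ) ^ 2 / (4 * s)) * (s : ℂ) ^ (-(ν + 1))

/-!
With `ν = 1/2 - 2πik`, the Fourier integral is `(1/√π) ∫ e^{νt} exp(-r² e^t - e^{-t}/(4λ²)) dt`.
The substitution `s = e^{-t}/(4λ²)` turns this into the Mellin transform at `-ν` of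
`s ↦ exp(-s - x²/(4s))` with `x = r/λ`, and that Mellin transform is `2^{ν+1} x^{-ν} K_ν(x)`.
-/

theorem ofReal_exp_cpow (t : ℝ) (w : ℂ) : ((Real.exp t : ℝ) : ℂ) ^ w = Complex.exp (t * w) := by
  rw [Complex.cpow_def_of_ne_zero (by exact_mod_cast (Real.exp_pos t).ne'),
    ← Complex.ofReal_log (Real.exp_pos t).le, Real.log_exp]

theorem mellin_eq_integral_exp_neg {E : Type*} [NormedAddCommGroup E] [NormedSpace ℂ E]
    (f : ℝ → E) (s : ℂ) : mellin f s = ∫ u : ℝ, Complex.exp (-s * u) • f (Real.exp (-u)) := by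
  have himage : (fun u => Real.exp (-u)) '' Set.univ = Set.Ioi 0 := by
    rw [Set.image_univ, show (fun u => Real.exp (-u)) = Real.exp ∘ Neg.neg from rfl,
      neg_surjective.range_comp, Real.range_exp]
  have hderiv : ∀ u ∈ Set.univ,
      HasDerivWithinAt (fun u => Real.exp (-u)) (-Real.exp (-u)) Set.univ u := fun u _ =>
    (by simpa using (hasDerivAt_neg u).exp : HasDerivAt _ _ u).hasDerivWithinAt
  have hinj : Set.InjOn (fun u => Real.exp (-u)) Set.univ :=
    fun u _ v _ h => neg_injective (Real.exp_injective h)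
  rw [mellin, ← himage, integral_image_eq_integral_abs_deriv_smul MeasurableSet.univ hderiv hinj,
    Measure.restrict_univ]
  congr 1 with u
  rw [abs_neg, abs_of_pos (Real.exp_pos _), ← smul_assoc, ofReal_exp_cpow, real_smul,
    Complex.ofReal_exp, ← Complex.exp_add]
  push_cast
  ring_nf

theorem Kbessel_eq_mellin (ν : ℂ) (x : ℝ) :
    Kbessel ν x = (x : ℂ) ^ ν / 2 ^ (ν + 1) *
      mellin (fun s : ℝ => ((Real.exp (-s - x ^ 2 / (4 * s)) : ℝ) : ℂ)) (-ν) := by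
  rw [Kbessel, mellin]
  congr 1
  refine integral_congr_ae (ae_of_all _ fun s => ?_)
  simp only [smul_eq_mul, show -ν - 1 = -(ν + 1) by ring]
  push_cast
  ring

/-- The classical `∫ e^{νt - a e^t - c e^{-t}} dt = 2 (c/a)^{ν/2} K_ν(2√(ac))`, written with
`x = 2√(ac)`, so that `(c/a)^{1/2} = 2c/x`. -/
theorem integral_cexp_mul_exp_eq_Kbessel (ν : ℂ) {a c x : ℝ} (hc : 0 < c) (hx : 0 < x)
    (hacx : 4 * a * c = x ^ 2) :
    ∫ t : ℝ, Complex.exp (ν * t) * ((Real.exp (-(a * Real.exp t) - c * Real.exp (-t)) : ℝ) : ℂ) =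
      2 * ((2 * c / x : ℝ) : ℂ) ^ ν * Kbessel ν x := by
  set g : ℝ → ℂ := fun s => ((Real.exp (-s - x ^ 2 / (4 * s)) : ℝ) : ℂ)
  have hmellin : ∫ t : ℝ, Complex.exp (ν * t) *
      ((Real.exp (-(a * Real.exp t) - c * Real.exp (-t)) : ℝ) : ℂ) = (c : ℂ) ^ ν * mellin g (-ν) := by
    have hscale := mellin_comp_mul_left g (-ν) hc
    rw [neg_neg] at hscale
    rw [← smul_eq_mul, ← hscale, mellin_eq_integral_exp_neg, neg_neg]
    congr 1 with t
    simp only [g, smul_eq_mul, Real.exp_neg]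
    congr 3
    rw [← hacx]
    field_simp
    ring
  have hpow : ((2 * c / x : ℝ) : ℂ) ^ ν * (x : ℂ) ^ ν = 2 ^ ν * (c : ℂ) ^ ν := by
    rw [← mul_cpow_ofReal_nonneg (by positivity) hx.le, ← Complex.ofReal_mul,
      div_mul_cancel₀ _ hx.ne', Complex.ofReal_mul,
      mul_cpow_ofReal_nonneg zero_le_two hc.le, Complex.ofReal_ofNat]
  rw [hmellin, Kbessel_eq_mellin, Complex.cpow_add _ _ two_ne_zero, Complex.cpow_one]
  have h2ν : (2 : ℂ) ^ ν ≠ 0 := by simp [Complex.cpow_eq_zero_iff]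
  generalize mellin g (-ν) = M
  field_simp
  linear_combination -M * hpow

/-- Fourier transform (in `t`) of `f(t) = (1/√π)·exp(−r² e^t − e^{−t}/(4λ²) + t/2)`:
`f̂(k) = (2/√π)·(2λr)^{−1/2 + 2πik}·K_{1/2 − 2πik}(r/λ)`. -/
theorem fourier_transform_f (lam r : ℝ) (hlam : 0 < lam) (hr : 0 < r) (k : ℝ) :
    (∫ t : ℝ,
        ((1 / Real.sqrt π *
            Real.exp (-(r ^ 2 * Real.exp t) - Real.exp (-t) / (4 * lam ^ 2) + t / 2) : ℝ) : ℂ) *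
          Complex.exp (-(2 * (π : ℂ) * Complex.I * (k : ℂ) * (t : ℂ)))) =
      2 / (Real.sqrt π : ℂ) *
        ((2 * lam * r : ℝ) : ℂ) ^ ((-1 / 2 : ℂ) + 2 * (π : ℂ) * Complex.I * (k : ℂ)) *
        Kbessel (1 / 2 - 2 * (π : ℂ) * Complex.I * (k : ℂ)) (r / lam) := by
  set ν : ℂ := 1 / 2 - 2 * (π : ℂ) * Complex.I * (k : ℂ)
  have hintegrand : ∀ t : ℝ,
      ((1 / Real.sqrt π *
          Real.exp (-(r ^ 2 * Real.exp t) - Real.exp (-t) / (4 * lam ^ 2) + t / 2) : ℝ) : ℂ) *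
        Complex.exp (-(2 * (π : ℂ) * Complex.I * (k : ℂ) * (t : ℂ))) =
      (1 / Real.sqrt π : ℂ) * (Complex.exp (ν * t) *
        ((Real.exp (-(r ^ 2 * Real.exp t) - 1 / (4 * lam ^ 2) * Real.exp (-t)) : ℝ) : ℂ)) := by
    intro t
    push_cast
    rw [mul_assoc, ← Complex.exp_add, ← Complex.exp_add]
    congr 2
    ring
  have hbase : 2 * (1 / (4 * lam ^ 2)) / (r / lam) = (2 * lam * r)⁻¹ := by
    field_simp
    ring
  rw [integral_congr_ae (ae_of_all _ hintegrand), integral_const_mul,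
    integral_cexp_mul_exp_eq_Kbessel ν (x := r / lam) (by positivity) (by positivity)
      (by field_simp), hbase,
    Complex.ofReal_inv, inv_cpow_ofReal_nonneg (by positivity), ← Complex.cpow_neg,
    show (-1 / 2 : ℂ) + 2 * (π : ℂ) * Complex.I * (k : ℂ) = -ν by ring]
  ring
end

section
/- Let λ > 0, δ > 0, h > 0, t₀ ∈ ℝ, M₁ ∈ ℕ, and set t_m = t₀ + m·h. Then the lower tail of the trapezoidal-rule truncation, E_{T,1} = (h/√π)·∑_{m=−∞}^{−M₁−1} exp(t_m/2 − e^{−t_m}/(4λ²) − δ² e^{t_m}), is bounded above by (2/√π)·exp(t_{−M₁}/2 − e^{−t_{−M₁}}/(4λ²)). -/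
open Real

/-- Lower tail bound for the trapezoidal-rule truncation: with `t_m = t₀ + m h`,
`(h/√π)·∑_{m ≤ −M₁−1} exp(t_m/2 − e^{−t_m}/(4λ²) − δ² e^{t_m})
  ≤ (2/√π)·exp(t_{−M₁}/2 − e^{−t_{−M₁}}/(4λ²))`. -/
theorem lower_tail_bound (lam δ h t₀ : ℝ) (hlam : 0 < lam) (hδ : 0 < δ) (hh : 0 < h)
    (M₁ : ℕ) :
    (h / Real.sqrt π) *
        ∑' n : ℕ,
          Real.exp ((t₀ - ((M₁ : ℝ) + 1 + n) * h) / 2 -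
              Real.exp (-(t₀ - ((M₁ : ℝ) + 1 + n) * h)) / (4 * lam ^ 2) -
              δ ^ 2 * Real.exp (t₀ - ((M₁ : ℝ) + 1 + n) * h)) ≤
      (2 / Real.sqrt π) *
        Real.exp ((t₀ - (M₁ : ℝ) * h) / 2 -
          Real.exp (-(t₀ - (M₁ : ℝ) * h)) / (4 * lam ^ 2)) := by
  have hπ : 0 < Real.sqrt π := Real.sqrt_pos.mpr Real.pi_pos
  set A : ℝ := t₀ - (M₁ : ℝ) * h with hA
  set E : ℝ := Real.exp (A / 2 - Real.exp (-A) / (4 * lam ^ 2)) with hE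
  set r : ℝ := Real.exp (-(h / 2)) with hr
  have hr0 : 0 < r := Real.exp_pos _
  have hr1 : r < 1 := by
    rw [hr, Real.exp_lt_one_iff]; linarith
  have hlam2 : 0 < 4 * lam ^ 2 := by positivity
  have hbound : ∀ n : ℕ,
      Real.exp ((t₀ - ((M₁ : ℝ) + 1 + n) * h) / 2 -
          Real.exp (-(t₀ - ((M₁ : ℝ) + 1 + n) * h)) / (4 * lam ^ 2) -
          δ ^ 2 * Real.exp (t₀ - ((M₁ : ℝ) + 1 + n) * h)) ≤ (E * r) * r ^ n := by
    intro n
    have ht : t₀ - ((M₁ : ℝ) + 1 + n) * h = A - ((n : ℝ) + 1) * h := by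
      rw [hA]; ring
    have hERn : (E * r) * r ^ n =
        Real.exp ((A - ((n : ℝ) + 1) * h) / 2 - Real.exp (-A) / (4 * lam ^ 2)) := by
      rw [hE, hr, ← Real.exp_nat_mul, ← Real.exp_add, ← Real.exp_add]
      congr 1
      push_cast
      ring
    rw [ht, hERn]
    apply Real.exp_le_exp.mpr
    have h1 : Real.exp (-A) ≤ Real.exp (-(A - ((n : ℝ) + 1) * h)) := by
      apply Real.exp_le_exp.mpr
      have : (0:ℝ) ≤ (n : ℝ) := Nat.cast_nonneg n
      nlinarith
    have h2 : Real.exp (-A) / (4 * lam ^ 2) ≤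
        Real.exp (-(A - ((n : ℝ) + 1) * h)) / (4 * lam ^ 2) := by
      gcongr
    have h3 : (0:ℝ) ≤ δ ^ 2 * Real.exp (A - ((n : ℝ) + 1) * h) := by positivity
    linarith
  have hgeo : Summable fun n : ℕ => (E * r) * r ^ n :=
    (summable_geometric_of_lt_one hr0.le hr1).mul_left _
  have hsum : Summable fun n : ℕ =>
      Real.exp ((t₀ - ((M₁ : ℝ) + 1 + n) * h) / 2 -
          Real.exp (-(t₀ - ((M₁ : ℝ) + 1 + n) * h)) / (4 * lam ^ 2) -
          δ ^ 2 * Real.exp (t₀ - ((M₁ : ℝ) + 1 + n) * h)) :=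
    Summable.of_nonneg_of_le (fun n => (Real.exp_pos _).le) hbound hgeo
  have htsum : (∑' n : ℕ,
      Real.exp ((t₀ - ((M₁ : ℝ) + 1 + n) * h) / 2 -
          Real.exp (-(t₀ - ((M₁ : ℝ) + 1 + n) * h)) / (4 * lam ^ 2) -
          δ ^ 2 * Real.exp (t₀ - ((M₁ : ℝ) + 1 + n) * h))) ≤ (E * r) * (1 - r)⁻¹ := by
    calc _ ≤ ∑' n : ℕ, (E * r) * r ^ n := Summable.tsum_le_tsum hbound hsum hgeo
    _ = (E * r) * (1 - r)⁻¹ := by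
        rw [tsum_mul_left, tsum_geometric_of_lt_one hr0.le hr1]
  have hE0 : 0 < E := Real.exp_pos _
  have hkey : h * r ≤ 2 * (1 - r) := by
    have h1 : h / 2 + 1 ≤ Real.exp (h / 2) := Real.add_one_le_exp _
    have h2 : Real.exp (h / 2) * r = 1 := by
      rw [hr, ← Real.exp_add]; simp
    nlinarith
  have hfinal : (h / Real.sqrt π) * ((E * r) * (1 - r)⁻¹) ≤ (2 / Real.sqrt π) * E := by
    rw [div_mul_eq_mul_div, div_mul_eq_mul_div, div_le_div_iff₀ hπ hπ]
    have h1r : 0 < 1 - r := by linarith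
    have : h * ((E * r) * (1 - r)⁻¹) ≤ 2 * E := by
      have hi : (1 - r)⁻¹ * (1 - r) = 1 := inv_mul_cancel₀ (by linarith)
      have hinv : 0 < (1 - r)⁻¹ := inv_pos.mpr h1r
      nlinarith [mul_le_mul_of_nonneg_left hkey (mul_pos hE0 hinv).le]
    nlinarith [Real.sqrt_nonneg π]
  calc (h / Real.sqrt π) * _ ≤ (h / Real.sqrt π) * ((E * r) * (1 - r)⁻¹) := by
        apply mul_le_mul_of_nonneg_left htsum (by positivity)
    _ ≤ (2 / Real.sqrt π) * E := hfinal
end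

section
/- Let λ > 0, h > 0, ε > 0, t₀ ∈ ℝ, and let t_m = t₀ + mh. If M₁ ≥ (1/h)·[t₀ − log(πε²/36) − W(18/(πλ²ε²))], where W is the Lambert W function (so W(x)e^{W(x)} = x for x > 0), then (2/√π)·exp(t_{−M₁}/2 − e^{−t_{−M₁}}/(4λ²)) ≤ ε/3. -/
open Real

/-- Criterion on `M₁` (via the Lambert `W` function, given implicitly by `W e^W = 18/(πλ²ε²)`)
ensuring the lower truncation error bound is at most `ε/3`: if
`M₁ ≥ (1/h)·[t₀ − log(πε²/36) − W(18/(πλ²ε²))]`, then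
`(2/√π)·exp(t_{−M₁}/2 − e^{−t_{−M₁}}/(4λ²)) ≤ ε/3` where `t_{−M₁} = t₀ − M₁ h`. -/
theorem lower_truncation_criterion (lam h ε t₀ : ℝ) (hlam : 0 < lam) (hh : 0 < h)
    (hε : 0 < ε) (M₁ : ℤ) (W : ℝ)
    (hW : W * Real.exp W = 18 / (π * lam ^ 2 * ε ^ 2))
    (hM₁ : (M₁ : ℝ) ≥ (1 / h) * (t₀ - Real.log (π * ε ^ 2 / 36) - W)) :
    (2 / Real.sqrt π) *
        Real.exp ((t₀ - (M₁ : ℝ) * h) / 2 -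
          Real.exp (-(t₀ - (M₁ : ℝ) * h)) / (4 * lam ^ 2)) ≤ ε / 3 := by
  have hπ := Real.pi_pos
  set x := t₀ - (M₁ : ℝ) * h with hxdef
  set A := π * ε ^ 2 / 36 with hA
  have hApos : 0 < A := by positivity
  -- from hM₁, x ≤ log A + W
  have hxle : x ≤ Real.log A + W := by
    have h1 : (1 / h) * (t₀ - Real.log A - W) * h ≤ (M₁ : ℝ) * h :=
      mul_le_mul_of_nonneg_right hM₁ hh.le
    have h2 : (1 / h) * (t₀ - Real.log A - W) * h = t₀ - Real.log A - W := by
      field_simp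
    rw [h2] at h1
    simp only [hxdef]
    linarith
  -- exp(-W) = W * π λ² ε² / 18
  have hexpW : Real.exp (-W) = W * (π * lam ^ 2 * ε ^ 2) / 18 := by
    have hc : (0:ℝ) < π * lam ^ 2 * ε ^ 2 := by positivity
    have : W * Real.exp W * Real.exp (-W) = (18 / (π * lam ^ 2 * ε ^ 2)) * Real.exp (-W) := by
      rw [hW]
    rw [mul_assoc, ← Real.exp_add] at this
    simp at this
    field_simp at this ⊢
    linarith
  -- key: exp(-(log A + W))/(4 λ²) = W/2
  have hEW : Real.exp (-(Real.log A + W)) / (4 * lam ^ 2) = W / 2 := by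
    rw [neg_add, Real.exp_add, Real.exp_neg, Real.exp_log hApos, hexpW]
    field_simp [hA]
    ring
  -- monotonicity in the exponent
  have hmono : x / 2 - Real.exp (-x) / (4 * lam ^ 2)
      ≤ (Real.log A + W) / 2 - W / 2 := by
    rw [← hEW]
    have hexpmono : Real.exp (-(Real.log A + W)) ≤ Real.exp (-x) :=
      Real.exp_le_exp.mpr (by linarith)
    gcongr
  have hsqrtπ : 0 < Real.sqrt π := Real.sqrt_pos.mpr hπ
  have step : (2 / Real.sqrt π) * Real.exp (x / 2 - Real.exp (-x) / (4 * lam ^ 2))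
      ≤ (2 / Real.sqrt π) * Real.exp ((Real.log A + W) / 2 - W / 2) := by
    gcongr
  -- compute the right-hand side
  have hval : (2 / Real.sqrt π) * Real.exp ((Real.log A + W) / 2 - W / 2) = ε / 3 := by
    have h1 : (Real.log A + W) / 2 - W / 2 = Real.log A / 2 := by ring
    have h2 : Real.exp (Real.log A / 2) = Real.sqrt A := by
      rw [Real.sqrt_eq_rpow, Real.rpow_def_of_pos hApos]
      ring_nf
    have h3 : Real.sqrt A = Real.sqrt π * ε / 6 := by
      rw [hA, show π * ε ^ 2 / 36 = (Real.sqrt π * ε / 6) ^ 2 by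
        rw [div_pow, mul_pow, Real.sq_sqrt hπ.le]; ring]
      exact Real.sqrt_sq (by positivity)
    rw [h1, h2, h3]
    field_simp
    ring
  calc (2 / Real.sqrt π) * Real.exp (x / 2 - Real.exp (-x) / (4 * lam ^ 2))
      ≤ (2 / Real.sqrt π) * Real.exp ((Real.log A + W) / 2 - W / 2) := step
    _ = ε / 3 := hval
end
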